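/- Let λ > 1, E : ℕ → ℝ with κ₁·λⁿ ≤ E(n) ≤ κ₂·λⁿ for all n ≥ 1 (κ₁, κ₂ > 0), and C(n) = (1/n)·∑_{d | n} μ(n/d)·E(d). Then there exist positive constants σ₃, σ₄ such that σ₃·log N ≤ ∑_{n=1}^{N} C(n)/λⁿ ≤ σ₄·log N for all sufficiently large N. -/

import Mathlib

/-!
Every proper divisor of `n` is at most `n / 2`, so in `C n` only the term `d = n` is of size
`λⁿ`; the others add up to at most `n · κ₂ · λ^(n/2)`. Hence `C n / λⁿ = E n / (n λⁿ) + O(λ^(-n/2))`,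
where the first term lies between `κ₁ / n` and `κ₂ / n`. Summing, the main terms give harmonic
sums, which are `log N + O(1)`, and the errors form a convergent geometric series.
-/

open Finset Real Filter

lemma sum_Icc_pow_le_div_one_sub {r : ℝ} (hr₀ : 0 ≤ r) (hr : r < 1) (N : ℕ) :
    ∑ n ∈ Icc 1 N, r ^ n ≤ r / (1 - r) := by
  rw [← Finset.Ico_add_one_right_eq_Icc]
  simpa using geom_sum_Ico_le_of_lt_one (m := 1) (n := N + 1) hr₀ hr

lemma sum_Icc_inv_eq_harmonic (N : ℕ) : ∑ n ∈ Icc 1 N, (n : ℝ)⁻¹ = harmonic N := by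
  simp [harmonic_eq_sum_Icc]

lemma log_le_sum_Icc_inv (N : ℕ) : log N ≤ ∑ n ∈ Icc 1 N, (n : ℝ)⁻¹ := by
  rw [sum_Icc_inv_eq_harmonic]
  refine le_trans ?_ (log_add_one_le_harmonic N)
  rcases N.eq_zero_or_pos with rfl | hN
  · simp
  · exact log_le_log (by positivity) (by push_cast; linarith)

lemma sum_Icc_inv_le_one_add_log (N : ℕ) : ∑ n ∈ Icc 1 N, (n : ℝ)⁻¹ ≤ 1 + log N := by
  rw [sum_Icc_inv_eq_harmonic]
  exact harmonic_le_one_add_log N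

lemma le_div_two_of_mem_properDivisors {d n : ℕ} (h : d ∈ n.properDivisors) : d ≤ n / 2 := by
  have h2 : 2 ≤ n / d := Nat.one_lt_div_of_mem_properDivisors h
  rw [Nat.le_div_iff_mul_le two_pos]
  calc d * 2 ≤ d * (n / d) := Nat.mul_le_mul_left d h2
    _ = n := Nat.mul_div_cancel' (Nat.mem_properDivisors.1 h).1

lemma card_properDivisors_le_self (n : ℕ) : #n.properDivisors ≤ n :=
  (card_le_card Nat.properDivisors_subset_divisors).trans (Nat.card_divisors_le_self n)

lemma pow_div_two_le_sqrt_pow {x : ℝ} (hx : 1 ≤ x) (n : ℕ) : x ^ (n / 2) ≤ √x ^ n := by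
  calc x ^ (n / 2) = √x ^ (2 * (n / 2)) := by rw [pow_mul, sq_sqrt (by linarith)]
    _ ≤ √x ^ n := pow_le_pow_right₀ (one_le_sqrt.2 hx) (Nat.mul_div_le n 2)

section

variable {f : ℕ → ℝ} {c K r : ℝ}

lemma log_sub_le_sum_Icc (hc : 0 ≤ c) (hK : 0 ≤ K) (hr₀ : 0 ≤ r) (hr : r < 1)
    (hf : ∀ n, 1 ≤ n → c / n - K * r ^ n ≤ f n) (N : ℕ) :
    c * log N - K * (r / (1 - r)) ≤ ∑ n ∈ Icc 1 N, f n := by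
  calc c * log N - K * (r / (1 - r))
      ≤ c * ∑ n ∈ Icc 1 N, (n : ℝ)⁻¹ - K * ∑ n ∈ Icc 1 N, r ^ n := by
        gcongr
        · exact log_le_sum_Icc_inv N
        · exact sum_Icc_pow_le_div_one_sub hr₀ hr N
    _ = ∑ n ∈ Icc 1 N, (c / n - K * r ^ n) := by
        simp only [sum_sub_distrib, mul_sum, div_eq_mul_inv]
    _ ≤ ∑ n ∈ Icc 1 N, f n := sum_le_sum fun n hn ↦ hf n (mem_Icc.1 hn).1

lemma sum_Icc_le_log_add (hc : 0 ≤ c) (hK : 0 ≤ K) (hr₀ : 0 ≤ r) (hr : r < 1)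
    (hf : ∀ n, 1 ≤ n → f n ≤ c / n + K * r ^ n) (N : ℕ) :
    ∑ n ∈ Icc 1 N, f n ≤ c * log N + (c + K * (r / (1 - r))) := by
  calc ∑ n ∈ Icc 1 N, f n ≤ ∑ n ∈ Icc 1 N, (c / n + K * r ^ n) :=
        sum_le_sum fun n hn ↦ hf n (mem_Icc.1 hn).1
    _ = c * ∑ n ∈ Icc 1 N, (n : ℝ)⁻¹ + K * ∑ n ∈ Icc 1 N, r ^ n := by
        simp only [sum_add_distrib, mul_sum, div_eq_mul_inv]
    _ ≤ c * (1 + log N) + K * (r / (1 - r)) := by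
        gcongr
        · exact sum_Icc_inv_le_one_add_log N
        · exact sum_Icc_pow_le_div_one_sub hr₀ hr N
    _ = c * log N + (c + K * (r / (1 - r))) := by ring

end

lemma exists_log_mul_le_and_le_log_mul {F : ℕ → ℝ} {c₁ c₂ B₁ B₂ : ℝ} (hc₁ : 0 < c₁)
    (hc₂ : 0 ≤ c₂) (hlo : ∀ N : ℕ, c₁ * log N - B₁ ≤ F N) (hhi : ∀ N : ℕ, F N ≤ c₂ * log N + B₂) :
    ∃ σ₃ σ₄ : ℝ, 0 < σ₃ ∧ 0 < σ₄ ∧ ∃ N₁ : ℕ, ∀ N : ℕ, N₁ ≤ N →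
      σ₃ * log N ≤ F N ∧ F N ≤ σ₄ * log N := by
  have hlog : Tendsto (fun N : ℕ ↦ log N) atTop atTop :=
    tendsto_log_atTop.comp tendsto_natCast_atTop_atTop
  obtain ⟨N₁, hN₁⟩ := eventually_atTop.1 (hlog.eventually_ge_atTop (max (2 * B₁ / c₁) B₂))
  refine ⟨c₁ / 2, c₂ + 1, by positivity, by positivity, N₁, fun N hN ↦ ?_⟩
  have hB₁ : 2 * B₁ ≤ log N * c₁ := (div_le_iff₀ hc₁).1 (le_of_max_le_left (hN₁ N hN))
  have hB₂ : B₂ ≤ log N := le_of_max_le_right (hN₁ N hN)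
  constructor <;> linarith [hlo N, hhi N]

lemma sum_divisors_moebius_mul_eq_add_sum_properDivisors (E : ℕ → ℝ) {n : ℕ} (hn : n ≠ 0) :
    ∑ d ∈ n.divisors, ((ArithmeticFunction.moebius (n / d) : ℤ) : ℝ) * E d =
      E n + ∑ d ∈ n.properDivisors, ((ArithmeticFunction.moebius (n / d) : ℤ) : ℝ) * E d := by
  rw [← Nat.cons_self_properDivisors hn, sum_cons, Nat.div_self (Nat.pos_of_ne_zero hn),
    ArithmeticFunction.moebius_apply_one, Int.cast_one, one_mul]

lemma abs_sum_properDivisors_moebius_mul_le {E : ℕ → ℝ} {lam κ : ℝ} (hlam : 1 ≤ lam)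
    (hκ : 0 ≤ κ) (hE : ∀ d, 1 ≤ d → |E d| ≤ κ * lam ^ d) (n : ℕ) :
    |∑ d ∈ n.properDivisors, ((ArithmeticFunction.moebius (n / d) : ℤ) : ℝ) * E d| ≤
      n * (κ * lam ^ (n / 2)) := by
  have hterm : ∀ d ∈ n.properDivisors,
      |((ArithmeticFunction.moebius (n / d) : ℤ) : ℝ) * E d| ≤ κ * lam ^ (n / 2) := by
    intro d hd
    have hμ : |((ArithmeticFunction.moebius (n / d) : ℤ) : ℝ)| ≤ 1 := by
      exact_mod_cast ArithmeticFunction.abs_moebius_le_one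
    calc |((ArithmeticFunction.moebius (n / d) : ℤ) : ℝ) * E d| ≤ 1 * |E d| := by
          rw [abs_mul]; gcongr
      _ ≤ κ * lam ^ d := by rw [one_mul]; exact hE d (Nat.pos_of_mem_properDivisors hd)
      _ ≤ κ * lam ^ (n / 2) := by
          gcongr
          exact le_div_two_of_mem_properDivisors hd
  calc _ ≤ ∑ d ∈ n.properDivisors, |((ArithmeticFunction.moebius (n / d) : ℤ) : ℝ) * E d| :=
        abs_sum_le_sum_abs _ _
    _ ≤ #n.properDivisors • (κ * lam ^ (n / 2)) := sum_le_card_nsmul _ _ _ hterm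
    _ ≤ n * (κ * lam ^ (n / 2)) := by
        rw [nsmul_eq_mul]
        gcongr
        exact_mod_cast card_properDivisors_le_self n

lemma abs_moebius_sum_div_pow_sub_le {E : ℕ → ℝ} {lam κ : ℝ} (hlam : 1 < lam) (hκ : 0 ≤ κ)
    (hE : ∀ d, 1 ≤ d → |E d| ≤ κ * lam ^ d) {n : ℕ} (hn : 1 ≤ n) :
    |(1 / (n : ℝ)) * (∑ d ∈ n.divisors, ((ArithmeticFunction.moebius (n / d) : ℤ) : ℝ) * E d) /
        lam ^ n - E n / lam ^ n / n| ≤ κ * (√lam)⁻¹ ^ n := by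
  set S := ∑ d ∈ n.properDivisors, ((ArithmeticFunction.moebius (n / d) : ℤ) : ℝ) * E d
  have hsq : lam ^ n = √lam ^ n * √lam ^ n := by rw [← mul_pow, mul_self_sqrt (by linarith)]
  rw [sum_divisors_moebius_mul_eq_add_sum_properDivisors E (by omega)]
  calc |1 / (n : ℝ) * (E n + S) / lam ^ n - E n / lam ^ n / n| = |S| / (n * lam ^ n) := by
        rw [← abs_of_pos (by positivity : (0 : ℝ) < n * lam ^ n), ← abs_div]
        congr 1
        field_simp
        ring
    _ ≤ n * (κ * lam ^ (n / 2)) / (n * lam ^ n) := by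
        gcongr
        exact abs_sum_properDivisors_moebius_mul_le hlam.le hκ hE n
    _ = κ * lam ^ (n / 2) / (√lam ^ n * √lam ^ n) := by
        rw [← hsq]
        field_simp
    _ ≤ κ * √lam ^ n / (√lam ^ n * √lam ^ n) := by
        gcongr
        exact pow_div_two_le_sqrt_pow hlam.le n
    _ = κ * (√lam)⁻¹ ^ n := by
        rw [inv_pow]
        field_simp

theorem stmt_6 (lam κ₁ κ₂ : ℝ) (hlam : 1 < lam) (hκ₁ : 0 < κ₁) (hκ₂ : 0 < κ₂)
    (E : ℕ → ℝ)
    (hE : ∀ n : ℕ, 1 ≤ n → κ₁ * lam ^ n ≤ E n ∧ E n ≤ κ₂ * lam ^ n)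
    (C : ℕ → ℝ)
    (hC : ∀ n : ℕ, 1 ≤ n →
      C n = (1 / (n : ℝ)) *
        ∑ d ∈ n.divisors, ((ArithmeticFunction.moebius (n / d) : ℤ) : ℝ) * E d) :
    ∃ σ₃ σ₄ : ℝ, 0 < σ₃ ∧ 0 < σ₄ ∧ ∃ N₁ : ℕ, ∀ N : ℕ, N₁ ≤ N →
      σ₃ * Real.log N ≤ ∑ n ∈ Finset.Icc 1 N, C n / lam ^ n ∧
      ∑ n ∈ Finset.Icc 1 N, C n / lam ^ n ≤ σ₄ * Real.log N := by
  set r := (√lam)⁻¹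
  have hr₀ : 0 ≤ r := by positivity
  have hr : r < 1 := inv_lt_one_of_one_lt₀ (lt_sqrt zero_le_one |>.2 (by simpa))
  have hEabs : ∀ d, 1 ≤ d → |E d| ≤ κ₂ * lam ^ d := fun d hd ↦
    abs_le.2 ⟨by nlinarith [hE d hd, pow_pos (zero_lt_one.trans hlam) d], (hE d hd).2⟩
  have hterm : ∀ n, 1 ≤ n →
      κ₁ / n - κ₂ * r ^ n ≤ C n / lam ^ n ∧ C n / lam ^ n ≤ κ₂ / n + κ₂ * r ^ n := by
    intro n hn
    have hpow : 0 < lam ^ n := by positivity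
    have hlo : κ₁ / n ≤ E n / lam ^ n / n := by
      gcongr
      exact (le_div_iff₀ hpow).2 (hE n hn).1
    have hhi : E n / lam ^ n / n ≤ κ₂ / n := by
      gcongr
      exact (div_le_iff₀ hpow).2 (hE n hn).2
    have herr := abs_le.1 (hC n hn ▸ abs_moebius_sum_div_pow_sub_le hlam hκ₂.le hEabs hn)
    constructor <;> linarith [herr.1, herr.2]
  exact exists_log_mul_le_and_le_log_mul hκ₁ hκ₂.le
    (log_sub_le_sum_Icc hκ₁.le hκ₂.le hr₀ hr fun n hn ↦ (hterm n hn).1)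
    (sum_Icc_le_log_add hκ₂.le hκ₂.le hr₀ hr fun n hn ↦ (hterm n hn).2)
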